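/- Mean of the stationary distribution: ∫₀^N x p_σ^s(x) dx = I^*(σ), where I^*(σ) = (1 − 1/(R₀ᴰ + 1 − R₀ᴰ/R₀ˢ)) N. -/

import Mathlib

/-!
Substituting `x = N t / (1 + t)` turns `x p(x) dx` into `C N t^a (1 + t) e^{-c₀ t} dt` with
`a = c₀ (R₀ˢ - 1)`, a sum of two Gamma integrals. Since `Γ(a + 2) = (a + 1) a Γ(a)`, the
normalisation of `C` reduces the mean to `N (R₀ˢ - 1)(R₀ˢ + 1/c₀) / ((R₀ˢ)² + (R₀ˢ - 1)/c₀)`,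
and `R₀ᴰ = R₀ˢ + 1/c₀` identifies this with `I^*(σ)`.
-/

open Real MeasureTheory Filter Set Topology

section ChangeOfVariables

variable {N : ℝ}

lemma image_mul_div_one_add_Ioi (hN : 0 < N) :
    (fun t : ℝ => N * t / (1 + t)) '' Ioi 0 = Ioo 0 N := by
  ext x
  constructor
  · rintro ⟨t, ht : 0 < t, rfl⟩
    refine ⟨by positivity, (div_lt_iff₀ (by positivity)).2 (by nlinarith)⟩
  · rintro ⟨hx0, hxN⟩
    refine ⟨x / (N - x), div_pos hx0 (sub_pos.2 hxN), ?_⟩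
    field_simp [(sub_pos.2 hxN).ne']
    ring

lemma strictMonoOn_mul_div_one_add (hN : 0 < N) :
    StrictMonoOn (fun t : ℝ => N * t / (1 + t)) (Ioi 0) := by
  intro s (hs : 0 < s) t (ht : 0 < t) hst
  rw [div_lt_div_iff₀ (by positivity) (by positivity)]
  nlinarith

lemma hasDerivAt_mul_div_one_add {t : ℝ} (ht : 1 + t ≠ 0) :
    HasDerivAt (fun t : ℝ => N * t / (1 + t)) (N / (1 + t) ^ 2) t := by
  refine (((hasDerivAt_id' t).const_mul N).div ((hasDerivAt_id' t).const_add 1) ht).congr_deriv ?_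
  ring

theorem integral_Ioo_eq_integral_Ioi_mul_div_one_add {E : Type*} [NormedAddCommGroup E]
    [NormedSpace ℝ E] (hN : 0 < N) (g : ℝ → E) :
    ∫ x in Ioo 0 N, g x = ∫ t in Ioi 0, (N / (1 + t) ^ 2) • g (N * t / (1 + t)) := by
  rw [← image_mul_div_one_add_Ioi hN, integral_image_eq_integral_abs_deriv_smul measurableSet_Ioi
    (fun t (ht : 0 < t) => (hasDerivAt_mul_div_one_add (by positivity)).hasDerivWithinAt)
    (strictMonoOn_mul_div_one_add hN).injOn]
  refine setIntegral_congr_fun measurableSet_Ioi fun t (ht : 0 < t) => ?_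
  rw [abs_of_pos (by positivity)]

end ChangeOfVariables

/-- `p_σ^s` with `a = c₀ (R₀ˢ - 1)` and `c = c₀`. -/
noncomputable def sisStationaryDensity (C N a c x : ℝ) : ℝ :=
  C * N ^ 3 * x ^ (a - 1) * (N - x) ^ (-(a + 3)) * exp (-c * x / (N - x))

section StationaryDensity

variable {C N a c : ℝ}

lemma mul_sisStationaryDensity_mul_div_one_add (hN : 0 < N) {t : ℝ} (ht : 0 < t) :
    N / (1 + t) ^ 2 * (N * t / (1 + t) * sisStationaryDensity C N a c (N * t / (1 + t))) =
      C * N * (t ^ a * exp (-(c * t)) + t ^ (a + 1) * exp (-(c * t))) := by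
  have hy : 0 < N / (1 + t) := by positivity
  have hx : N * t / (1 + t) = t * (N / (1 + t)) := by ring
  have hNx : N - t * (N / (1 + t)) = N / (1 + t) := by field_simp; ring
  have hexp : -c * (t * (N / (1 + t))) / (N / (1 + t)) = -(c * t) := by field_simp
  rw [hx, sisStationaryDensity, hNx, hexp, rpow_sub_one (by positivity), rpow_neg hy.le,
    rpow_add hy, mul_rpow ht.le hy.le, rpow_add_one ht.ne', rpow_ofNat]
  field_simp

lemma integrableOn_rpow_mul_exp_neg_mul_Ioi {s r : ℝ} (hs : 0 < s) (hr : 0 < r) :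
    IntegrableOn (fun t : ℝ => t ^ (s - 1) * exp (-(r * t))) (Ioi 0) :=
  .of_integral_ne_zero <| by
    rw [integral_rpow_mul_exp_neg_mul_Ioi hs hr]
    positivity

theorem integral_mul_sisStationaryDensity (hN : 0 < N) (ha : 0 < a) (hc : 0 < c) :
    ∫ x in (0 : ℝ)..N, x * sisStationaryDensity C N a c x =
      C * N * (c ^ (-a) * Gamma a) * (a * (c + a + 1) / c ^ 2) := by
  have hΓ₁ := integral_rpow_mul_exp_neg_mul_Ioi (a := a + 1) (by positivity) hc
  have hΓ₂ := integral_rpow_mul_exp_neg_mul_Ioi (a := a + 2) (by positivity) hc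
  have hI₁ := integrableOn_rpow_mul_exp_neg_mul_Ioi (s := a + 1) (by positivity) hc
  have hI₂ := integrableOn_rpow_mul_exp_neg_mul_Ioi (s := a + 2) (by positivity) hc
  simp only [add_sub_cancel_right, show a + 2 - 1 = a + 1 by ring] at hΓ₁ hΓ₂ hI₁ hI₂
  rw [intervalIntegral.integral_of_le hN.le, integral_Ioc_eq_integral_Ioo,
    integral_Ioo_eq_integral_Ioi_mul_div_one_add hN]
  simp_rw [smul_eq_mul]
  rw [setIntegral_congr_fun measurableSet_Ioi fun t (ht : 0 < t) =>
      mul_sisStationaryDensity_mul_div_one_add hN ht,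
    integral_const_mul, integral_add hI₁ hI₂, hΓ₁, hΓ₂, show a + 2 = a + 1 + 1 by ring,
    Gamma_add_one (s := a + 1) (by positivity), Gamma_add_one ha.ne', one_div,
    inv_rpow hc.le, inv_rpow hc.le, rpow_neg hc.le]
  simp only [rpow_add_one hc.ne']
  field_simp
  ring

end StationaryDensity

theorem mean_of_stationary_distribution_general
    (N β μ γ σ : ℝ) (hN : 0 < N) (hμ : 0 < μ) (hγ : 0 < γ) (hσ : 0 < σ)
    (R0D R0S c0 C : ℝ)
    (hR0D : R0D = β * N / (μ + γ))
    (hR0S : R0S = β * N / (μ + γ) - σ ^ 2 * N ^ 2 / (2 * (μ + γ)))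
    (hc0 : c0 = 2 * (μ + γ) / (σ ^ 2 * N ^ 2))
    (hR : 1 < R0S)
    (hC : C⁻¹ = c0 ^ (-(c0 * (R0S - 1))) * (R0S ^ 2 + c0⁻¹ * (R0S - 1)) *
      Real.Gamma (c0 * (R0S - 1)))
    (p : ℝ → ℝ)
    (hp : ∀ x, p x = C * N ^ 3 * x ^ (c0 * (R0S - 1) - 1) *
      (N - x) ^ (-(c0 * (R0S - 1) + 3)) * Real.exp (-c0 * x / (N - x)))
    (Istarσ : ℝ)
    (hIstarσ : Istarσ = (1 - 1 / (R0D + 1 - R0D / R0S)) * N) :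
    ∫ x in (0:ℝ)..N, x * p x = Istarσ := by
  have hc0_pos : 0 < c0 := by rw [hc0]; positivity
  have hR0D_eq : R0D = R0S + c0⁻¹ := by rw [hR0D, hR0S, hc0, inv_div]; ring
  have ha : 0 < c0 * (R0S - 1) := mul_pos hc0_pos (sub_pos.2 hR)
  set D := R0S ^ 2 + c0⁻¹ * (R0S - 1) with hD_def
  have hD : 0 < D := by positivity
  have hmoment : c0 * (R0S - 1) * (c0 + c0 * (R0S - 1) + 1) / c0 ^ 2 = D - R0S := by
    rw [hD_def]
    field_simp
    ring
  have hdenom : R0D + 1 - R0D / R0S = D / R0S := by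
    rw [hR0D_eq, hD_def]
    field_simp
    ring
  rw [show p = sisStationaryDensity C N (c0 * (R0S - 1)) c0 from funext hp,
    integral_mul_sisStationaryDensity hN ha hc0_pos, ← inv_inv C, hC, hIstarσ, hdenom, hmoment]
  field_simp

/-- mean of the stationary distribution. -/
theorem mean_of_stationary_distribution
    (N β μ γ σ : ℝ) (hN : 0 < N) (hβ : 0 < β) (hμ : 0 < μ) (hγ : 0 < γ) (hσ : 0 < σ)
    (R0D R0S c0 C : ℝ)
    (hR0D : R0D = β * N / (μ + γ))
    (hR0S : R0S = β * N / (μ + γ) - σ ^ 2 * N ^ 2 / (2 * (μ + γ)))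
    (hc0 : c0 = 2 * (μ + γ) / (σ ^ 2 * N ^ 2))
    (hR : 1 < R0S)
    (hCpos : 0 < C)
    (hC : C⁻¹ = c0 ^ (-(c0 * (R0S - 1))) * (R0S ^ 2 + c0⁻¹ * (R0S - 1)) *
      Real.Gamma (c0 * (R0S - 1)))
    (p : ℝ → ℝ)
    (hp : ∀ x, p x = C * N ^ 3 * x ^ (c0 * (R0S - 1) - 1) *
      (N - x) ^ (-(c0 * (R0S - 1) + 3)) * Real.exp (-c0 * x / (N - x)))
    (Istarσ : ℝ)
    (hIstarσ : Istarσ = (1 - 1 / (R0D + 1 - R0D / R0S)) * N) :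
    ∫ x in (0:ℝ)..N, x * p x = Istarσ :=
  mean_of_stationary_distribution_general N β μ γ σ hN hμ hγ hσ R0D R0S c0 C hR0D hR0S hc0 hR hC p
    hp Istarσ hIstarσ
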